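/- For every topological space X, every n ∈ ℕ, and every homology class α ∈ H_n(X;ℝ), the ℓ¹-semi-norm of α equals the normalised ℓ¹-semi-norm of α: inf{‖c‖₁ : c a singular cycle representing α} = inf{‖c‖₁ : c a normalised singular cycle representing α}. -/

import Mathlib

open Finset

noncomputable section SingularChains

/-- The affine map `Δ^k → Δ^n` extending the vertex map `π`. -/
def affMap {k n : ℕ} (π : Fin (k + 1) → Fin (n + 1)) :
    C(stdSimplex ℝ (Fin (k + 1)), stdSimplex ℝ (Fin (n + 1))) where
  toFun x := ⟨fun i => ∑ l ∈ Finset.univ.filter (fun l => π l = i), (x : Fin (k + 1) → ℝ) l, by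
    constructor
    · intro i
      exact Finset.sum_nonneg fun l _ => x.2.1 l
    · rw [← x.2.2]
      exact Finset.sum_fiberwise _ _ _⟩
  continuous_toFun := by
    apply Continuous.subtype_mk
    exact continuous_pi fun i =>
      continuous_finset_sum _ fun l _ => (continuous_apply l).comp continuous_subtype_val

variable {X : Type} [TopologicalSpace X]

/-- Singular `n`-simplices in `X`. -/
abbrev Sing (n : ℕ) (X : Type) [TopologicalSpace X] := C(stdSimplex ℝ (Fin (n + 1)), X)

/-- Singular `n`-chains with real coefficients. -/
abbrev Chain (n : ℕ) (X : Type) [TopologicalSpace X] := Sing n X →₀ ℝ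

/-- The `j`-th face map `∂ⱼ : C_{n+1}(X;ℝ) → C_n(X;ℝ)`. -/
def face {n : ℕ} (j : Fin (n + 2)) : Chain (n + 1) X →ₗ[ℝ] Chain n X :=
  Finsupp.lmapDomain ℝ ℝ fun σ => σ.comp (affMap (Fin.succAbove j))

/-- The singular boundary operator `∂ = Σⱼ (-1)ʲ ∂ⱼ`. -/
def bdry (n : ℕ) : Chain (n + 1) X →ₗ[ℝ] Chain n X :=
  ∑ j : Fin (n + 2), ((-1 : ℝ) ^ (j : ℕ)) • face j

/-- The symmetrisation of a singular simplex. -/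
def symSimplex {n : ℕ} (σ : Sing n X) : Chain n X :=
  (((n + 1).factorial : ℝ))⁻¹ •
    ∑ π : Equiv.Perm (Fin (n + 1)),
      ((Equiv.Perm.sign π : ℤ) : ℝ) • Finsupp.single (σ.comp (affMap π)) (1 : ℝ)

/-- The symmetrisation map `sym_n : C_n(X;ℝ) → C_n(X;ℝ)`. -/
def symCh (n : ℕ) : Chain n X →ₗ[ℝ] Chain n X :=
  Finsupp.lsum ℝ fun σ => LinearMap.toSpanSingleton ℝ _ (symSimplex σ)

/-- The ℓ¹-norm of a singular chain. -/
def l1 {n : ℕ} (c : Chain n X) : ℝ := ∑ σ ∈ c.support, |c σ|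

/-- Cycles. -/
def cyc (X : Type) [TopologicalSpace X] : (n : ℕ) → Submodule ℝ (Chain n X)
  | 0 => ⊤
  | n + 1 => LinearMap.ker (bdry n)

/-- Boundaries. -/
def bdries (X : Type) [TopologicalSpace X] (n : ℕ) : Submodule ℝ (Chain n X) :=
  LinearMap.range (bdry n)

/-- A chain is normalised if all but the last face map vanish on it. -/
def IsNormalised : {n : ℕ} → Chain n X → Prop
  | 0, _ => True
  | n + 1, c => ∀ j : Fin (n + 2), j ≠ Fin.last (n + 1) → face j c = 0

/-- The cyclic permutation `τⱼ = (j j-1 ⋯ 1 0)`. -/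
def tau (n : ℕ) (j : Fin (n + 1)) : Equiv.Perm (Fin (n + 1)) := (Fin.cycleRange j)⁻¹

end SingularChains

/-!
Symmetrisation, the signed average of a simplex over the permutations of its vertices, does not
increase the `ℓ¹`-norm, and on `(k+1)`-chains its faces satisfy
`∂ⱼ ∘ sym = ((-1)ʲ / (k+2)) • sym ∘ ∂`; so it sends a cycle to a normalised cycle of no larger
norm. That cycle is homologous to the original one because `sym` is chain homotopic to the
identity: both are natural operators given by ordered chains on the vertices of the model simplex,
realised through affine maps, and coning from a vertex of the model simplex builds a natural
homotopy between them (acyclic models).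
-/

noncomputable section

abbrev OrdChain (k : ℕ) (V : Type*) := (Fin (k + 1) → V) →₀ ℝ

namespace OrdChain

open Finsupp

variable {V W U : Type*}

def map {k : ℕ} (g : V → W) : OrdChain k V →ₗ[ℝ] OrdChain k W :=
  lmapDomain ℝ ℝ (g ∘ ·)

def face {k : ℕ} (j : Fin (k + 2)) : OrdChain (k + 1) V →ₗ[ℝ] OrdChain k V :=
  lmapDomain ℝ ℝ (· ∘ j.succAbove)

def bdry (k : ℕ) : OrdChain (k + 1) V →ₗ[ℝ] OrdChain k V :=
  ∑ j : Fin (k + 2), ((-1 : ℝ) ^ (j : ℕ)) • face j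

def sym (k : ℕ) : OrdChain k V →ₗ[ℝ] OrdChain k V :=
  ((k + 1).factorial : ℝ)⁻¹ •
    ∑ π : Equiv.Perm (Fin (k + 1)), ((Equiv.Perm.sign π : ℤ) : ℝ) • lmapDomain ℝ ℝ (· ∘ ⇑π)

def cone {k : ℕ} (v : V) : OrdChain k V →ₗ[ℝ] OrdChain (k + 1) V :=
  lmapDomain ℝ ℝ fun f => Fin.cons v f

def coface {m : ℕ} (N : ℕ) : OrdChain m (Fin (N + 1)) →ₗ[ℝ] OrdChain m (Fin (N + 2)) :=
  ∑ j : Fin (N + 2), ((-1 : ℝ) ^ (j : ℕ)) • map j.succAbove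

@[simp] lemma map_single {k : ℕ} (g : V → W) (f : Fin (k + 1) → V) (a : ℝ) :
    map g (single f a) = single (g ∘ f) a := by
  simp [map]

@[simp] lemma face_single {k : ℕ} (j : Fin (k + 2)) (f : Fin (k + 2) → V) (a : ℝ) :
    face j (single f a) = single (f ∘ j.succAbove) a := by
  simp [face]

@[simp] lemma cone_single {k : ℕ} (v : V) (f : Fin (k + 1) → V) (a : ℝ) :
    cone v (single f a) = single (Fin.cons v f) a := by
  simp [cone]

lemma bdry_apply {k : ℕ} (c : OrdChain (k + 1) V) :
    bdry k c = ∑ j : Fin (k + 2), ((-1 : ℝ) ^ (j : ℕ)) • face j c := by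
  simp [bdry, LinearMap.sum_apply]

lemma coface_apply {m N : ℕ} (c : OrdChain m (Fin (N + 1))) :
    coface N c = ∑ j : Fin (N + 2), ((-1 : ℝ) ^ (j : ℕ)) • map j.succAbove c := by
  simp [coface, LinearMap.sum_apply]

lemma sym_single {k : ℕ} (f : Fin (k + 1) → V) (a : ℝ) :
    sym k (single f a) = ((k + 1).factorial : ℝ)⁻¹ •
      ∑ π : Equiv.Perm (Fin (k + 1)), ((Equiv.Perm.sign π : ℤ) : ℝ) • single (f ∘ π) a := by
  simp [sym, LinearMap.sum_apply]

lemma map_id {k : ℕ} : map (k := k) (id : V → V) = LinearMap.id :=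
  lhom_ext fun f a => by simp

lemma map_comp {k : ℕ} (g : W → U) (f : V → W) : map (k := k) (g ∘ f) = map g ∘ₗ map f :=
  lhom_ext fun f a => by simp [Function.comp_assoc]

lemma face_map {k : ℕ} (g : V → W) (j : Fin (k + 2)) (c : OrdChain (k + 1) V) :
    face j (map g c) = map g (face j c) := by
  induction c using induction_linear with
  | zero => simp
  | add c d hc hd => simp only [map_add, hc, hd]
  | single f a => simp [Function.comp_assoc]

lemma bdry_map {k : ℕ} (g : V → W) (c : OrdChain (k + 1) V) :
    bdry k (map g c) = map g (bdry k c) := by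
  simp only [bdry_apply, map_sum, map_smul, face_map]

lemma sym_map {k : ℕ} (g : V → W) (c : OrdChain k V) : sym k (map g c) = map g (sym k c) := by
  induction c using induction_linear with
  | zero => simp
  | add c d hc hd => simp only [map_add, hc, hd]
  | single f a =>
    rw [map_single, sym_single, sym_single, map_smul, map_sum]
    simp only [map_smul, map_single, Function.comp_assoc]

lemma bdry_coface {m N : ℕ} (c : OrdChain (m + 1) (Fin (N + 1))) :
    bdry m (coface N c) = coface N (bdry m c) := by
  simp only [coface_apply, map_sum, map_smul, bdry_map]

lemma sym_coface {m N : ℕ} (c : OrdChain m (Fin (N + 1))) :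
    sym m (coface N c) = coface N (sym m c) := by
  simp only [coface_apply, map_sum, map_smul, sym_map]

lemma sym_zero_apply (c : OrdChain 0 V) : sym 0 c = c := by
  induction c using induction_linear with
  | zero => simp
  | add c d hc hd => simp only [map_add, hc, hd]
  | single f a => simp [sym_single, Subsingleton.elim _ (1 : Equiv.Perm (Fin 1))]

lemma bdry_cone {k : ℕ} (v : V) (c : OrdChain (k + 1) V) :
    bdry (k + 1) (cone v c) = c - cone v (bdry k c) := by
  induction c using induction_linear with
  | zero => simp
  | add c d hc hd => simp only [map_add, hc, hd]; abel
  | single f a =>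
    have h0 : Fin.cons v f ∘ (0 : Fin (k + 3)).succAbove = f := by
      funext i; simp
    rw [cone_single, bdry_apply, Fin.sum_univ_succ, bdry_apply, map_sum]
    simp only [face_single, map_smul, cone_single, Fin.cons_comp_succ_succAbove, h0, Fin.val_zero,
      pow_zero, one_smul, Fin.val_succ, pow_succ, mul_neg_one, neg_smul, Finset.sum_neg_distrib,
      sub_eq_add_neg]
    rfl

open CategoryTheory in
def vertexCosimplicial (m : ℕ) : CosimplicialObject (ModuleCat ℝ) where
  obj N := ModuleCat.of ℝ (OrdChain m (Fin (N.len + 1)))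
  map f := ModuleCat.ofHom (map f.toOrderHom)
  map_id _ := by ext1; exact map_id
  map_comp f g := by ext1; exact map_comp g.toOrderHom f.toOrderHom

lemma coface_eq_objD {m : ℕ} (N : ℕ) : coface (m := m) N =
    (AlgebraicTopology.AlternatingCofaceMapComplex.objD (vertexCosimplicial m) N).hom := by
  simp only [AlgebraicTopology.AlternatingCofaceMapComplex.objD, ModuleCat.hom_sum,
    ModuleCat.hom_zsmul, coface]
  refine Finset.sum_congr rfl fun j _ => ?_
  rw [← Int.cast_smul_eq_zsmul ℝ]
  push_cast
  rfl

lemma coface_coface {m N : ℕ} (c : OrdChain m (Fin (N + 1))) :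
    coface (N + 1) (coface N c) = 0 := by
  rw [coface_eq_objD, coface_eq_objD]
  exact congrArg (fun f => ModuleCat.Hom.hom f c)
    (AlgebraicTopology.AlternatingCofaceMapComplex.d_squared (vertexCosimplicial m) N)

end OrdChain

section Permutations

open Equiv Equiv.Perm

lemma tau_apply_zero {n : ℕ} (t : Fin (n + 1)) : tau n t 0 = t :=
  Fin.cycleRange_symm_zero t

lemma tau_apply_succ {n : ℕ} (t : Fin (n + 1)) (x : Fin n) : tau n t x.succ = t.succAbove x :=
  Fin.cycleRange_symm_succ t x

lemma sign_tau {n : ℕ} (t : Fin (n + 1)) : sign (tau n t) = (-1) ^ (t : ℕ) := by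
  simp [tau, Fin.sign_cycleRange]

def insertPerm {k : ℕ} (j m : Fin (k + 2)) (ρ : Perm (Fin (k + 1))) : Perm (Fin (k + 2)) :=
  tau (k + 1) m * decomposeFin.symm (0, ρ) * (tau (k + 1) j)⁻¹

variable {k : ℕ} (j m : Fin (k + 2)) (ρ : Perm (Fin (k + 1)))

lemma insertPerm_apply_self : insertPerm j m ρ j = m := by
  have : (tau (k + 1) j)⁻¹ j = 0 := by rw [Perm.inv_eq_iff_eq, tau_apply_zero]
  rw [insertPerm, Perm.mul_apply, Perm.mul_apply, this, decomposeFin_symm_apply_zero,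
    tau_apply_zero]

lemma insertPerm_apply_succAbove (i : Fin (k + 1)) :
    insertPerm j m ρ (j.succAbove i) = m.succAbove (ρ i) := by
  have : (tau (k + 1) j)⁻¹ (j.succAbove i) = i.succ := by
    rw [Perm.inv_eq_iff_eq, tau_apply_succ]
  rw [insertPerm, Perm.mul_apply, Perm.mul_apply, this, decomposeFin_symm_apply_succ,
    swap_self, refl_apply, tau_apply_succ]

lemma sign_insertPerm :
    sign (insertPerm j m ρ) = (-1) ^ (m : ℕ) * (-1) ^ (j : ℕ) * sign ρ := by
  rw [insertPerm, map_mul, map_mul, map_inv, sign_tau, sign_tau, decomposeFin.symm_sign,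
    if_pos rfl, one_mul, ← inv_pow, Int.units_inv_eq_self, mul_right_comm]

lemma insertPerm_injective :
    Function.Injective fun p : Fin (k + 2) × Perm (Fin (k + 1)) => insertPerm j p.1 p.2 := by
  rintro ⟨m, ρ⟩ ⟨m', ρ'⟩ h
  have hm : m = m' := by simpa only [insertPerm_apply_self] using congr($h j)
  subst hm
  refine Prod.ext rfl (Perm.ext fun i => (Fin.succAbove_right_injective (p := m)) ?_)
  simpa only [insertPerm_apply_succAbove] using congr($h (j.succAbove i))

lemma insertPerm_bijective :
    Function.Bijective fun p : Fin (k + 2) × Perm (Fin (k + 1)) => insertPerm j p.1 p.2 :=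
  (Fintype.bijective_iff_injective_and_card _).mpr
    ⟨insertPerm_injective j, by simp [Fintype.card_perm, Nat.factorial_succ]⟩

end Permutations

namespace OrdChain

open Finsupp Equiv.Perm

variable {V : Type*}

lemma face_sym {k : ℕ} (j : Fin (k + 2)) (c : OrdChain (k + 1) V) :
    face j (sym (k + 1) c) = ((-1 : ℝ) ^ (j : ℕ) * ((k : ℝ) + 2)⁻¹) • sym k (bdry k c) := by
  induction c using induction_linear with
  | zero => simp
  | add c d hc hd => simp only [map_add, hc, hd, smul_add]
  | single f a =>
    have hcomp (m : Fin (k + 2)) (ρ : Equiv.Perm (Fin (k + 1))) :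
        (f ∘ insertPerm j m ρ) ∘ j.succAbove = (f ∘ m.succAbove) ∘ ρ := by
      funext i; simp [insertPerm_apply_succAbove]
    have hsign (m : Fin (k + 2)) (ρ : Equiv.Perm (Fin (k + 1))) :
        ((sign (insertPerm j m ρ) : ℤ) : ℝ) =
          (-1) ^ (m : ℕ) * (-1) ^ (j : ℕ) * ((sign ρ : ℤ) : ℝ) := by
      rw [sign_insertPerm]; push_cast; rfl
    have hfact : ((k + 2).factorial : ℝ) = ((k : ℝ) + 2) * (k + 1).factorial := by
      rw [Nat.factorial_succ]; push_cast; ring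
    rw [sym_single, map_smul, map_sum, ← (insertPerm_bijective j).sum_comp, Fintype.sum_prod_type,
      bdry_apply]
    simp only [map_smul, map_sum, face_single, sym_single, hcomp, hsign, Finset.smul_sum,
      smul_smul]
    refine Finset.sum_congr rfl fun m _ => Finset.sum_congr rfl fun ρ _ => ?_
    rw [hfact]
    congr 1
    field_simp

lemma bdry_sym {k : ℕ} (c : OrdChain (k + 1) V) : bdry k (sym (k + 1) c) = sym k (bdry k c) := by
  have hsum : ∑ j : Fin (k + 2), (-1 : ℝ) ^ (j : ℕ) * ((-1) ^ (j : ℕ) * ((k : ℝ) + 2)⁻¹) = 1 := by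
    simp_rw [← mul_assoc, ← pow_add, ← two_mul, pow_mul, neg_one_sq, one_pow, one_mul]
    rw [Finset.sum_const, Finset.card_univ, Fintype.card_fin, nsmul_eq_mul]
    push_cast
    exact mul_inv_cancel₀ (by positivity)
  rw [bdry_apply]
  simp only [face_sym, smul_smul, ← Finset.sum_smul, hsum, one_smul]

def idSimplex (k : ℕ) : OrdChain k (Fin (k + 1)) := single id 1

lemma bdry_idSimplex (k : ℕ) : bdry k (idSimplex (k + 1)) = coface k (idSimplex k) := by
  simp [idSimplex, bdry_apply, coface_apply]

def symDefect (k : ℕ) : OrdChain k (Fin (k + 1)) := sym k (idSimplex k) - idSimplex k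

lemma symDefect_zero : symDefect 0 = 0 := by
  rw [symDefect, sym_zero_apply, sub_self]

lemma bdry_symDefect (k : ℕ) : bdry k (symDefect (k + 1)) = coface k (symDefect k) := by
  rw [symDefect, map_sub, bdry_sym, bdry_idSimplex, sym_coface, symDefect, map_sub]

/-- Coning from the vertex `0` contracts the cycle
`symDefect (k + 1) - coface k (homotopyModel k)`. -/
def homotopyModel : (k : ℕ) → OrdChain (k + 1) (Fin (k + 1))
  | 0 => 0
  | k + 1 => cone 0 (symDefect (k + 1) - coface k (homotopyModel k))

lemma bdry_homotopyModel (k : ℕ) :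
    bdry (k + 1) (homotopyModel (k + 1)) = symDefect (k + 1) - coface k (homotopyModel k) := by
  induction k with
  | zero => simp [homotopyModel, bdry_cone, bdry_symDefect, symDefect_zero]
  | succ k ih =>
    have hcycle :
        bdry (k + 1) (symDefect (k + 2) - coface (k + 1) (homotopyModel (k + 1))) = 0 := by
      rw [map_sub, bdry_symDefect, bdry_coface, ih, map_sub, coface_coface, sub_zero, sub_self]
    rw [homotopyModel, bdry_cone, hcycle, map_zero, sub_zero]

end OrdChain

section Realisation

open Finsupp

variable {X : Type} [TopologicalSpace X]

lemma affMap_apply {k n : ℕ} (π : Fin (k + 1) → Fin (n + 1)) (x : stdSimplex ℝ (Fin (k + 1)))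
    (i : Fin (n + 1)) :
    (affMap π x : Fin (n + 1) → ℝ) i = ∑ l ∈ univ.filter (π · = i), (x : Fin (k + 1) → ℝ) l :=
  rfl

lemma affMap_comp {a b c : ℕ} (g : Fin (b + 1) → Fin (c + 1)) (f : Fin (a + 1) → Fin (b + 1)) :
    affMap (g ∘ f) = (affMap g).comp (affMap f) := by
  ext x i
  simp only [ContinuousMap.comp_apply, affMap_apply, Function.comp_apply]
  rw [← sum_fiberwise_of_maps_to (g := f) (t := univ.filter (g · = i)) (by simp)]
  refine sum_congr rfl fun l hl => sum_congr ?_ fun _ _ => rfl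
  ext t
  simp only [mem_filter, mem_univ, true_and] at hl ⊢
  exact ⟨fun h => h.2, fun h => ⟨h ▸ hl, h⟩⟩

lemma affMap_id {k : ℕ} : affMap (id : Fin (k + 1) → Fin (k + 1)) = ContinuousMap.id _ := by
  ext x i
  simp [affMap_apply, Finset.filter_eq']

def realise {k m : ℕ} (σ : Sing k X) : OrdChain m (Fin (k + 1)) →ₗ[ℝ] Chain m X :=
  lmapDomain ℝ ℝ fun f => σ.comp (affMap f)

@[simp] lemma realise_single {k m : ℕ} (σ : Sing k X) (f : Fin (m + 1) → Fin (k + 1)) (a : ℝ) :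
    realise σ (single f a) = single (σ.comp (affMap f)) a := by
  simp [realise]

lemma realise_idSimplex {k : ℕ} (σ : Sing k X) : realise σ (OrdChain.idSimplex k) = single σ 1 := by
  rw [OrdChain.idSimplex, realise_single, affMap_id, ContinuousMap.comp_id]

lemma realise_map {k k' m : ℕ} (σ : Sing k X) (g : Fin (k' + 1) → Fin (k + 1))
    (c : OrdChain m (Fin (k' + 1))) :
    realise σ (OrdChain.map g c) = realise (σ.comp (affMap g)) c := by
  induction c using induction_linear with
  | zero => simp
  | add c d hc hd => simp only [map_add, hc, hd]
  | single f a => simp [affMap_comp, ContinuousMap.comp_assoc]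

lemma face_realise {k m : ℕ} (σ : Sing k X) (j : Fin (m + 2))
    (c : OrdChain (m + 1) (Fin (k + 1))) :
    face j (realise σ c) = realise σ (OrdChain.face j c) := by
  induction c using induction_linear with
  | zero => simp
  | add c d hc hd => simp only [map_add, hc, hd]
  | single f a => simp [face, affMap_comp, ContinuousMap.comp_assoc]

lemma bdry_apply {n : ℕ} (c : Chain (n + 1) X) :
    bdry n c = ∑ j : Fin (n + 2), ((-1 : ℝ) ^ (j : ℕ)) • face j c := by
  simp [bdry, LinearMap.sum_apply]

lemma bdry_realise {k m : ℕ} (σ : Sing k X) (c : OrdChain (m + 1) (Fin (k + 1))) :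
    bdry m (realise σ c) = realise σ (OrdChain.bdry m c) := by
  simp only [bdry_apply, OrdChain.bdry_apply, map_sum, map_smul, face_realise]

end Realisation

section NaturalOperators

open Finsupp

variable {X : Type} [TopologicalSpace X]

def modelMap {k m : ℕ} : OrdChain m (Fin (k + 1)) →ₗ[ℝ] Chain k X →ₗ[ℝ] Chain m X :=
  (lsum ℝ fun σ => LinearMap.toSpanSingleton ℝ _ (realise σ)).flip

lemma modelMap_single {k m : ℕ} (M : OrdChain m (Fin (k + 1))) (σ : Sing k X) (a : ℝ) :
    modelMap M (single σ a) = a • realise σ M := by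
  simp [modelMap]

lemma modelMap_idSimplex {k : ℕ} :
    (modelMap (OrdChain.idSimplex k) : Chain k X →ₗ[ℝ] Chain k X) = LinearMap.id :=
  lhom_ext fun σ a => by
    rw [modelMap_single, realise_idSimplex, LinearMap.id_apply, smul_single_one]

lemma symCh_eq_modelMap (k : ℕ) :
    (symCh k : Chain k X →ₗ[ℝ] Chain k X) = modelMap (OrdChain.sym k (OrdChain.idSimplex k)) :=
  lhom_ext fun σ a => by
    rw [symCh, lsum_single, LinearMap.toSpanSingleton_apply, modelMap_single,
      OrdChain.idSimplex, OrdChain.sym_single, map_smul, map_sum]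
    simp only [map_smul, realise_single, Function.id_comp, symSimplex]

lemma face_comp_modelMap {k m : ℕ} (j : Fin (m + 2)) (M : OrdChain (m + 1) (Fin (k + 1))) :
    face j ∘ₗ (modelMap M : Chain k X →ₗ[ℝ] Chain (m + 1) X) = modelMap (OrdChain.face j M) :=
  lhom_ext fun σ a => by simp [modelMap_single, face_realise]

lemma bdry_comp_modelMap {k m : ℕ} (M : OrdChain (m + 1) (Fin (k + 1))) :
    bdry m ∘ₗ (modelMap M : Chain k X →ₗ[ℝ] Chain (m + 1) X) = modelMap (OrdChain.bdry m M) :=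
  lhom_ext fun σ a => by simp [modelMap_single, bdry_realise]

lemma modelMap_comp_bdry {k m : ℕ} (M : OrdChain m (Fin (k + 1))) :
    (modelMap M : Chain k X →ₗ[ℝ] Chain m X) ∘ₗ bdry k = modelMap (OrdChain.coface k M) :=
  lhom_ext fun σ a => by
    simp only [LinearMap.comp_apply, bdry_apply, face, lmapDomain_apply, mapDomain_single, map_sum,
      map_smul, OrdChain.coface_apply, LinearMap.sum_apply, LinearMap.smul_apply, modelMap_single,
      realise_map]

lemma face_comp_symCh {k : ℕ} (j : Fin (k + 2)) :
    face j ∘ₗ (symCh (k + 1) : Chain (k + 1) X →ₗ[ℝ] Chain (k + 1) X) =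
      ((-1 : ℝ) ^ (j : ℕ) * ((k : ℝ) + 2)⁻¹) • (symCh k ∘ₗ bdry k) := by
  rw [symCh_eq_modelMap, face_comp_modelMap, OrdChain.face_sym, OrdChain.bdry_idSimplex,
    OrdChain.sym_coface, map_smul, ← modelMap_comp_bdry, symCh_eq_modelMap]

lemma symCh_sub_id {k : ℕ} :
    (symCh (k + 1) : Chain (k + 1) X →ₗ[ℝ] Chain (k + 1) X) - LinearMap.id =
      bdry (k + 1) ∘ₗ modelMap (OrdChain.homotopyModel (k + 1)) +
        modelMap (OrdChain.homotopyModel k) ∘ₗ bdry k := by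
  rw [symCh_eq_modelMap, ← modelMap_idSimplex, ← map_sub modelMap, bdry_comp_modelMap,
    modelMap_comp_bdry, ← map_add modelMap, OrdChain.bdry_homotopyModel, sub_add_cancel,
    OrdChain.symDefect]

end NaturalOperators

section L1Norm

open Finsupp

variable {X : Type} [TopologicalSpace X] {n m : ℕ}

lemma l1_eq_sum_of_support_subset {c : Chain n X} {s : Finset (Sing n X)} (h : c.support ⊆ s) :
    l1 c = ∑ σ ∈ s, |c σ| :=
  sum_subset h fun σ _ hσ => by rw [notMem_support_iff.mp hσ, abs_zero]

lemma l1_add_le (c d : Chain n X) : l1 (c + d) ≤ l1 c + l1 d := by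
  classical
  rw [l1_eq_sum_of_support_subset support_add,
    l1_eq_sum_of_support_subset (subset_union_left (s₂ := d.support)),
    l1_eq_sum_of_support_subset (subset_union_right (s₁ := c.support)), ← sum_add_distrib]
  exact sum_le_sum fun σ _ => abs_add_le _ _

lemma l1_sum_le {ι : Type*} (s : Finset ι) (c : ι → Chain n X) :
    l1 (∑ i ∈ s, c i) ≤ ∑ i ∈ s, l1 (c i) := by
  induction s using Finset.cons_induction with
  | empty => simp [l1]
  | cons i s hi ih =>
    rw [Finset.sum_cons, Finset.sum_cons]
    exact (l1_add_le _ _).trans (add_le_add_right ih _)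

lemma l1_smul (a : ℝ) (c : Chain n X) : l1 (a • c) = |a| * l1 c := by
  rw [l1_eq_sum_of_support_subset support_smul, l1, Finset.mul_sum]
  simp [abs_mul]

lemma l1_single (σ : Sing n X) (a : ℝ) : l1 (single σ a) = |a| := by
  rw [l1_eq_sum_of_support_subset support_single_subset, sum_singleton, single_eq_same]

lemma l1_symSimplex_le (σ : Sing n X) : l1 (symSimplex σ) ≤ 1 := by
  have hfact : (0 : ℝ) < (n + 1).factorial := by positivity
  have hsign (π : Equiv.Perm (Fin (n + 1))) : |((Equiv.Perm.sign π : ℤ) : ℝ)| = 1 := by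
    rcases Int.units_eq_one_or (Equiv.Perm.sign π) with h | h <;> simp [h]
  rw [symSimplex, l1_smul, abs_inv, abs_of_pos hfact, inv_mul_le_iff₀ hfact, mul_one]
  refine (l1_sum_le _ _).trans_eq ?_
  simp [l1_single, hsign, Fintype.card_perm]

lemma l1_map_le_of_l1_single_le (T : Chain n X →ₗ[ℝ] Chain m X)
    (hT : ∀ σ, l1 (T (single σ 1)) ≤ 1) (c : Chain n X) : l1 (T c) ≤ l1 c := by
  have hc : T c = ∑ σ ∈ c.support, c σ • T (single σ 1) := by
    conv_lhs => rw [← c.sum_single]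
    simp [Finsupp.sum, map_sum, ← map_smul]
  rw [hc]
  refine (l1_sum_le _ _).trans (sum_le_sum fun σ _ => ?_)
  rw [l1_smul]
  exact mul_le_of_le_one_right (abs_nonneg _) (hT σ)

lemma l1_symCh_le (c : Chain n X) : l1 (symCh n c) ≤ l1 c :=
  l1_map_le_of_l1_single_le _ (fun σ => by simpa [symCh] using l1_symSimplex_le σ) c

end L1Norm

end

lemma exists_normalised_homologous_l1_le {X : Type} [TopologicalSpace X] {n : ℕ} {c : Chain n X}
    (hc : c ∈ cyc X n) :
    ∃ c' ∈ cyc X n, IsNormalised c' ∧ c' - c ∈ bdries X n ∧ l1 c' ≤ l1 c := by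
  cases n with
  | zero => exact ⟨c, hc, trivial, by simp, le_rfl⟩
  | succ k =>
    have hbdry : bdry k c = 0 := hc
    have hface (j : Fin (k + 2)) : face j (symCh (k + 1) c) = 0 := by
      rw [← LinearMap.comp_apply, face_comp_symCh, LinearMap.smul_apply, LinearMap.comp_apply,
        hbdry, map_zero, smul_zero]
    refine ⟨symCh (k + 1) c, ?_, fun j _ => hface j,
      ⟨modelMap (OrdChain.homotopyModel (k + 1)) c, ?_⟩, l1_symCh_le c⟩
    · show bdry k _ = 0
      simp [bdry_apply, hface]
    · have := congr($(symCh_sub_id (X := X) (k := k)) c)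
      simpa [hbdry] using this.symm

theorem l1_seminorm_eq_normalised_general (X : Type) [TopologicalSpace X] (n : ℕ)
    (z : Chain n X) :
    sInf {r : ℝ | ∃ c ∈ cyc X n, c - z ∈ bdries X n ∧ l1 c = r} =
      sInf {r : ℝ | ∃ c ∈ cyc X n, IsNormalised c ∧ c - z ∈ bdries X n ∧ l1 c = r} := by
  refine csInf_eq_csInf_of_forall_exists_le ?_ ?_
  · rintro _ ⟨c, hc, hcz, rfl⟩
    obtain ⟨c', hc', hnorm, hc'c, hle⟩ := exists_normalised_homologous_l1_le hc
    exact ⟨l1 c', ⟨c', hc', hnorm, by simpa using add_mem hc'c hcz, rfl⟩, hle⟩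
  · rintro _ ⟨c, hc, -, hcz, rfl⟩
    exact ⟨l1 c, ⟨c, hc, hcz, rfl⟩, le_rfl⟩

/-- The ℓ¹-semi-norm of a homology class equals the normalised ℓ¹-semi-norm:
the infimum of ℓ¹-norms over cycles in a given homology class equals the infimum
over normalised cycles in that class. -/
theorem l1_seminorm_eq_normalised (X : Type) [TopologicalSpace X] (n : ℕ)
    (z : Chain n X) (hz : z ∈ cyc X n) :
    sInf {r : ℝ | ∃ c ∈ cyc X n, c - z ∈ bdries X n ∧ l1 c = r} =
      sInf {r : ℝ | ∃ c ∈ cyc X n, IsNormalised c ∧ c - z ∈ bdries X n ∧ l1 c = r} :=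
  l1_seminorm_eq_normalised_general X n z
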